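/- Let k be a field and let V and W be finitely generated FI-modules over k. Then the FI-module V ⊗ W, defined by (V ⊗ W)(S) = V(S) ⊗_k W(S) with the maps induced functorially by those of V and W, is a finitely generated FI-module. -/

import Mathlib

open CategoryTheory

/-- The category FI of finite sets and injections. -/
def FI : Type 1 := FintypeCat

instance : CoeSort FI Type := ⟨fun S => S.1⟩

noncomputable instance (S : FI) : Fintype S := @Fintype.ofFinite S S.2

instance : Category FI where
  Hom S T := {f : S → T // Function.Injective f}
  id S := ⟨id, fun _ _ h => h⟩
  comp f g := ⟨g.1 ∘ f.1, fun _ _ h => f.2 (g.2 h)⟩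

/-- A finite type, as an object of `FI`. -/
def FI.of (α : Type) [Fintype α] : FI := FintypeCat.of α

/-- An FI-module over `k` is a functor from `FI` to `k`-modules. -/
abbrev FIModule (k : Type) [CommRing k] := FI ⥤ ModuleCat.{0} k

variable {k : Type} [CommRing k]

/-- A sub-FI-module of an FI-module `V`. -/
structure SubFIModule (V : FIModule k) where
  carrier : ∀ S : FI, Submodule k (V.obj S)
  map_mem : ∀ {S T : FI} (f : S ⟶ T) (x : V.obj S), x ∈ carrier S → V.map f x ∈ carrier T

/-- An FI-module is finitely generated if some finite collection of elements
is contained in no proper sub-FI-module. -/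
def FIModule.FG (V : FIModule k) : Prop :=
  ∃ (ι : Type) (_ : Finite ι) (S : ι → FI) (v : ∀ i, V.obj (S i)),
    ∀ W : SubFIModule V, (∀ i, v i ∈ W.carrier (S i)) → ∀ T : FI, W.carrier T = ⊤


open scoped TensorProduct in
/-- The tensor product of two FI-modules, given by `(V ⊗ W)(S) = V(S) ⊗ₖ W(S)`. -/
noncomputable def FIModule.tensor (V W : FIModule k) : FIModule k where
  obj S := ModuleCat.of k (V.obj S ⊗[k] W.obj S)
  map {S T} f := ModuleCat.ofHom (TensorProduct.map (V.map f).hom (W.map f).hom)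
  map_id S := by
    ext : 1
    simp [ModuleCat.hom_id, ModuleCat.hom_ofHom, TensorProduct.map_id]
  map_comp f g := by
    ext : 1
    simp [ModuleCat.hom_comp, ModuleCat.hom_ofHom, TensorProduct.map_comp]

/-!
If `v` generates `V` and `w` generates `W`, then `V(U) ⊗ W(U)` is spanned by the tensors
`f_* v i ⊗ g_* w j` with `f, g` injections into `U`. Such a pair `(f, g)` factors through the
union of the two images, a set of size at most `|S i| + |T j|`, so every such tensor is the
pushforward of one of the finitely many generators `f₀_* v i ⊗ g₀_* w j` with `f₀, g₀`
injections into some `Fin d`, `d ≤ |S i| + |T j|`.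
-/

open scoped TensorProduct

instance (S T : FI) : Finite (S ⟶ T) :=
  inferInstanceAs (Finite {f : S → T // Function.Injective f})

namespace FI

noncomputable def finsetIncl {U : FI} (s : Finset U) : FI.of (Fin s.card) ⟶ U :=
  ⟨fun a => (s.equivFin.symm a : U), fun _ _ hab => s.equivFin.symm.injective (Subtype.ext hab)⟩

lemma exists_comp_finsetIncl {A U : FI} (s : Finset U) (f : A ⟶ U) (hf : ∀ a, f.1 a ∈ s) :
    ∃ f₀ : A ⟶ FI.of (Fin s.card), f₀ ≫ finsetIncl s = f :=
  ⟨⟨fun a => s.equivFin ⟨f.1 a, hf a⟩,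
      fun _ _ hab => f.2 (congrArg Subtype.val (s.equivFin.injective hab))⟩,
    Subtype.ext (funext fun a => by
      change ((s.equivFin.symm (s.equivFin ⟨f.1 a, hf a⟩) : s) : U) = f.1 a
      rw [Equiv.symm_apply_apply])⟩

lemma exists_factor_through_fin {A B U : FI} (f : A ⟶ U) (g : B ⟶ U) :
    ∃ d ≤ Fintype.card A + Fintype.card B, ∃ (f₀ : A ⟶ FI.of (Fin d))
      (g₀ : B ⟶ FI.of (Fin d)) (h : FI.of (Fin d) ⟶ U), f₀ ≫ h = f ∧ g₀ ≫ h = g := by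
  classical
  let s : Finset U := Finset.univ.image f.1 ∪ Finset.univ.image g.1
  have hcard : s.card ≤ Fintype.card A + Fintype.card B :=
    (Finset.card_union_le _ _).trans (add_le_add Finset.card_image_le Finset.card_image_le)
  obtain ⟨f₀, hf₀⟩ := exists_comp_finsetIncl s f (by simp [s])
  obtain ⟨g₀, hg₀⟩ := exists_comp_finsetIncl s g (by simp [s])
  exact ⟨s.card, hcard, f₀, g₀, finsetIncl s, hf₀, hg₀⟩

end FI

namespace FIModule

def pushforwards (V : FIModule k) {ι : Type} (S : ι → FI) (v : ∀ i, V.obj (S i)) (U : FI) :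
    Set (V.obj U) :=
  {x | ∃ i, ∃ f : S i ⟶ U, V.map f (v i) = x}

lemma map_mem_pushforwards (V : FIModule k) {ι : Type} (S : ι → FI) (v : ∀ i, V.obj (S i))
    {U U' : FI} (h : U ⟶ U') {x : V.obj U} (hx : x ∈ pushforwards V S v U) :
    V.map h x ∈ pushforwards V S v U' := by
  obtain ⟨i, f, rfl⟩ := hx
  exact ⟨i, f ≫ h, by rw [V.map_comp]; rfl⟩

def spanPushforwards (V : FIModule k) {ι : Type} (S : ι → FI) (v : ∀ i, V.obj (S i)) :
    SubFIModule V where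
  carrier U := Submodule.span k (pushforwards V S v U)
  map_mem {A B} h x hx := by
    have hle : (Submodule.span k (pushforwards V S v A)).map (V.map h).hom ≤
        Submodule.span k (pushforwards V S v B) := by
      rw [Submodule.map_span, Submodule.span_le]
      rintro _ ⟨y, hy, rfl⟩
      exact Submodule.subset_span (map_mem_pushforwards V S v h hy)
    exact hle (Submodule.mem_map_of_mem hx)

lemma span_pushforwards_eq_top (V : FIModule k) {ι : Type} (S : ι → FI) (v : ∀ i, V.obj (S i))
    (hv : ∀ W : SubFIModule V, (∀ i, v i ∈ W.carrier (S i)) → ∀ T : FI, W.carrier T = ⊤)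
    (U : FI) : Submodule.span k (pushforwards V S v U) = ⊤ :=
  hv (spanPushforwards V S v)
    (fun i => Submodule.subset_span ⟨i, 𝟙 _, by rw [V.map_id]; rfl⟩) U

lemma tensor_map_tmul (V W : FIModule k) {U U' : FI} (h : U ⟶ U') (x : V.obj U)
    (y : W.obj U) : (V.tensor W).map h (x ⊗ₜ[k] y) = V.map h x ⊗ₜ[k] W.map h y :=
  rfl

end FIModule

lemma Submodule.eq_top_of_tmul_mem {R M N : Type*} [CommSemiring R] [AddCommMonoid M]
    [AddCommMonoid N] [Module R M] [Module R N] {s : Set M} {t : Set N}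
    (hs : Submodule.span R s = ⊤) (ht : Submodule.span R t = ⊤) (P : Submodule R (M ⊗[R] N))
    (hP : ∀ m ∈ s, ∀ n ∈ t, m ⊗ₜ[R] n ∈ P) : P = ⊤ := by
  rw [eq_top_iff, ← TensorProduct.map₂_mk_top_top_eq_top, ← hs, ← ht,
    Submodule.map₂_span_span, Submodule.span_le]
  rintro _ ⟨m, hm, n, hn, rfl⟩
  exact hP m hm n hn

theorem stmt4 {k : Type} [Field k] (V W : FIModule k) (hV : V.FG) (hW : W.FG) :
    (V.tensor W).FG := by
  obtain ⟨ι, _, S, v, hv⟩ := hV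
  obtain ⟨κ, _, T, w, hw⟩ := hW
  refine ⟨(i : ι) × (j : κ) × (d : Fin (Fintype.card (S i) + Fintype.card (T j) + 1)) ×
      (S i ⟶ FI.of (Fin d)) × (T j ⟶ FI.of (Fin d)), inferInstance,
    fun p => FI.of (Fin p.2.2.1),
    fun p => V.map p.2.2.2.1 (v p.1) ⊗ₜ[k] W.map p.2.2.2.2 (w p.2.1), ?_⟩
  intro P hP U
  refine Submodule.eq_top_of_tmul_mem (FIModule.span_pushforwards_eq_top V S v hv U)
    (FIModule.span_pushforwards_eq_top W T w hw U) _ ?_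
  rintro _ ⟨i, f, rfl⟩ _ ⟨j, g, rfl⟩
  obtain ⟨d, hd, f₀, g₀, h, rfl, rfl⟩ := FI.exists_factor_through_fin f g
  have hmem := P.map_mem h _ (hP ⟨i, j, ⟨d, Nat.lt_succ_of_le hd⟩, f₀, g₀⟩)
  rwa [FIModule.tensor_map_tmul, ← ConcreteCategory.comp_apply, ← ConcreteCategory.comp_apply,
    ← V.map_comp, ← W.map_comp] at hmem
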